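/- arXiv:1310.1843 — 4 statements merged into one kernel-verified Lean document; each statement's English description precedes it below -/
import Mathlib

section
/- Let A = K[u_0, u_1, ...] be the polynomial ring in countably many variables over a field K of characteristic zero, with derivation ∂ given by ∂(u_n) = u_{n+1}, and let σ be the automorphism with σ(u_n) = -u_n. Then the fixed subalgebra A^σ is not finitely generated as a differential algebra: there is no finite subset X of A^σ such that A^σ is generated as a K-algebra by all iterated derivatives ∂^k(x) of elements x ∈ X. -/
/-!
A σ-invariant polynomial has no linear part, so the quadratic part of a product of invariants
`a * b` is `a₀ • q b + b₀ • q a`; hence the quadratic part of every element of the algebra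
generated by a set `G` of invariants lies in the span of the quadratic parts of `G`.
Give `uₙ` the weight `n`. Since `∂` raises the weight by exactly one, of the derivatives
`∂ᵏ x` of the elements `x` of a finite set `S` at most `|S| (W + 1)` have a non-zero quadratic
part of weight `M`, where `W` bounds the weights occurring in `S`; these span a space of
dimension at most `N`, independent of `M`. But for `M = 2N + 1` the `N + 1` linearly
independent invariants `uᵢ u_{M-i}` (`i ≤ N`) are their own quadratic parts of weight `M`.
-/

open MvPolynomial Finset

namespace MvPolynomial

section CommSemiring

variable {σ R : Type*} [CommSemiring R]

attribute [local instance] MvPolynomial.gradedAlgebra in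
theorem homogeneousComponent_mul (φ ψ : MvPolynomial σ R) (n : ℕ) :
    homogeneousComponent n (φ * ψ) =
      ∑ ij ∈ antidiagonal n, homogeneousComponent ij.1 φ * homogeneousComponent ij.2 ψ := by
  simp only [← decomposition.decompose'_apply]
  rw [← DirectSum.coe_mul_apply_eq_sum_antidiagonal]
  exact congrArg (fun z => (z n : MvPolynomial σ R))
    (DirectSum.decompose_mul (homogeneousSubmodule σ R) φ ψ)

theorem weightedHomogeneousComponent_homogeneousComponent_comm {M : Type*} [AddCommMonoid M]
    (w : σ → M) (m : M) (n : ℕ) (φ : MvPolynomial σ R) :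
    weightedHomogeneousComponent w m (homogeneousComponent n φ) =
      homogeneousComponent n (weightedHomogeneousComponent w m φ) := by
  classical
  ext d
  simp only [coeff_weightedHomogeneousComponent, coeff_homogeneousComponent]
  split_ifs <;> rfl

theorem exists_weightedHomogeneousComponent_ne_zero_of_map {M : Type*} [AddCancelCommMonoid M]
    {w : σ → M} {k : M} (L : MvPolynomial σ R →ₗ[R] MvPolynomial σ R)
    (hL : ∀ {φ m}, IsWeightedHomogeneous w φ m → IsWeightedHomogeneous w (L φ) (m + k))
    {φ : MvPolynomial σ R} {n : M} (h : weightedHomogeneousComponent w n (L φ) ≠ 0) :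
    ∃ m, m + k = n ∧ weightedHomogeneousComponent w m φ ≠ 0 := by
  by_contra! hφ
  apply h
  rw [← sum_weightedHomogeneousComponent w φ,
    finsum_eq_sum _ (weightedHomogeneousComponent_finsupp φ), map_sum, map_sum]
  refine sum_eq_zero fun m _ => ?_
  by_cases hm : m + k = n
  · rw [hφ m hm, map_zero, map_zero]
  · exact IsWeightedHomogeneous.weightedHomogeneousComponent_ne n
      (hL (weightedHomogeneousComponent_isWeightedHomogeneous m φ)) (Ne.symm hm)

theorem IsWeightedHomogeneous.derivation {M : Type*} [AddCommMonoid M] {w : σ → M} {k : M}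
    (D : Derivation R (MvPolynomial σ R) (MvPolynomial σ R))
    (hD : ∀ i, IsWeightedHomogeneous w (D (X i)) (w i + k)) {φ : MvPolynomial σ R} {m : M}
    (hφ : IsWeightedHomogeneous w φ m) : IsWeightedHomogeneous w (D φ) (m + k) := by
  rw [show D = mkDerivation R fun i => D (X i) from derivation_ext fun i => by simp]
  induction hφ using IsWeightedHomogeneous.induction_on with
  | zero => simpa using isWeightedHomogeneous_zero R w _
  | add p q _ _ hp hq => simpa using hp.add hq
  | monomial d r hd =>
    rw [mkDerivation_monomial, smul_eq_C_mul]
    refine (IsWeightedHomogeneous.sum _ _ _ fun i hi => ?_).C_mul r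
    have hle : Finsupp.single i 1 ≤ d :=
      Finsupp.single_le_iff.mpr (Nat.one_le_iff_ne_zero.mpr (Finsupp.mem_support_iff.mp hi))
    have hweight : Finsupp.weight w (d - Finsupp.single i 1) + w i = m := by
      rw [← hd, ← tsub_add_cancel_of_le hle, map_add, Finsupp.weight_single, one_smul,
        add_tsub_cancel_right]
    rw [← hweight, add_assoc]
    exact (isWeightedHomogeneous_monomial _ _ _ rfl).mul (hD i)

theorem IsWeightedHomogeneous.iterate_derivation {M : Type*} [AddCommMonoid M] {w : σ → M}
    {k : M} (D : Derivation R (MvPolynomial σ R) (MvPolynomial σ R))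
    (hD : ∀ i, IsWeightedHomogeneous w (D (X i)) (w i + k)) {φ : MvPolynomial σ R} {m : M}
    (hφ : IsWeightedHomogeneous w φ m) (n : ℕ) :
    IsWeightedHomogeneous w (D^[n] φ) (m + n • k) := by
  induction n with
  | zero => simpa using hφ
  | succ n ih =>
    rw [Function.iterate_succ_apply', succ_nsmul, ← add_assoc]
    exact ih.derivation D hD

theorem homogeneousComponent_two_mem_span_of_mem_adjoin {G : Set (MvPolynomial σ R)}
    (hG : ∀ g ∈ G, homogeneousComponent 1 g = 0) {a : MvPolynomial σ R}
    (ha : a ∈ Algebra.adjoin R G) :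
    homogeneousComponent 2 a ∈ Submodule.span R (homogeneousComponent 2 '' G) := by
  suffices homogeneousComponent 1 a = 0 ∧
      homogeneousComponent 2 a ∈ Submodule.span R (homogeneousComponent 2 '' G) from this.2
  induction ha using Algebra.adjoin_induction with
  | mem g hg => exact ⟨hG g hg, Submodule.subset_span ⟨g, hg, rfl⟩⟩
  | algebraMap r =>
    have h (n : ℕ) (hn : 0 < n) :
        homogeneousComponent n (algebraMap R (MvPolynomial σ R) r) = 0 :=
      homogeneousComponent_eq_zero _ _ (by rwa [algebraMap_eq, totalDegree_C])
    exact ⟨h 1 one_pos, h 2 two_pos ▸ Submodule.zero_mem _⟩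
  | add x y _ _ hx hy =>
    rw [map_add, map_add, hx.1, hy.1, add_zero]
    exact ⟨rfl, Submodule.add_mem _ hx.2 hy.2⟩
  | mul x y _ _ hx hy =>
    have hsplit (n : ℕ) : homogeneousComponent n (x * y) =
        ∑ i ∈ range (n + 1), homogeneousComponent i x * homogeneousComponent (n - i) y := by
      rw [homogeneousComponent_mul, Finset.Nat.sum_antidiagonal_eq_sum_range_succ_mk]
    have h1 : homogeneousComponent 1 (x * y) = 0 := by
      simp [hsplit, sum_range_succ, hx.1, hy.1]
    have h2 : homogeneousComponent 2 (x * y) =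
        coeff 0 x • homogeneousComponent 2 y + coeff 0 y • homogeneousComponent 2 x := by
      simp [hsplit, sum_range_succ, hx.1, hy.1, homogeneousComponent_zero, smul_eq_C_mul,
        mul_comm]
    rw [h2]
    exact ⟨h1, add_mem (Submodule.smul_mem _ _ hy.2) (Submodule.smul_mem _ _ hx.2)⟩

theorem X_mul_X_mem_span_weightedHomogeneousComponent_of_mem_adjoin {M : Type*}
    [AddCommMonoid M] (w : σ → M) {G : Set (MvPolynomial σ R)}
    (hG : ∀ g ∈ G, homogeneousComponent 1 g = 0) {i j : σ}
    (h : X i * X j ∈ Algebra.adjoin R G) :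
    X i * X j ∈ Submodule.span R
      ((weightedHomogeneousComponent w (w i + w j) ∘ homogeneousComponent 2) '' G) := by
  have hself : weightedHomogeneousComponent w (w i + w j) (homogeneousComponent 2 (X i * X j)) =
      (X i * X j : MvPolynomial σ R) := by
    rw [homogeneousComponent_eq_self ((isHomogeneous_X R i).mul (isHomogeneous_X R j)),
      weightedHomogeneousComponent_eq_self
        ((isWeightedHomogeneous_X R w i).mul (isWeightedHomogeneous_X R w j))]
  rw [← hself, Set.image_comp, ← Submodule.map_span]
  exact Submodule.mem_map_of_mem (homogeneousComponent_two_mem_span_of_mem_adjoin hG h)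

theorem linearIndependent_X_mul_X_sub {N M : ℕ} (hM : 2 * N < M) :
    LinearIndependent R fun i : Fin (N + 1) => (X (i : ℕ) * X (M - i) : MvPolynomial ℕ R) := by
  have hinj : Function.Injective fun i : Fin (N + 1) =>
      Finsupp.single (i : ℕ) 1 + Finsupp.single (M - i) 1 := by
    intro i j hij
    have := DFunLike.congr_fun hij (i : ℕ)
    simp only [Finsupp.add_apply, Finsupp.single_apply] at this
    ext
    split_ifs at this <;> omega
  convert (basisMonomials ℕ R).linearIndependent.comp _ hinj with i
  simp [X, monomial_mul]

end CommSemiring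

section CommRing

variable {σ R : Type*} [CommRing R]

theorem aeval_neg_X_monomial (d : σ →₀ ℕ) (r : R) :
    aeval (fun i => -X i) (monomial d r) = monomial d ((-1) ^ d.degree * r) := by
  have hsign : (d.prod fun _ k => ((-1) ^ k : MvPolynomial σ R)) = C ((-1) ^ d.degree) := by
    rw [map_pow, map_neg, map_one]
    exact Finset.prod_pow_eq_pow_sum _ _ _
  simp_rw [aeval_monomial, monomial_eq, neg_pow (X _ : MvPolynomial σ R)]
  rw [Finsupp.prod_mul, hsign, algebraMap_eq, C_mul]
  ring

theorem coeff_aeval_neg_X (φ : MvPolynomial σ R) (d : σ →₀ ℕ) :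
    coeff d (aeval (fun i => -X i) φ) = (-1) ^ d.degree * coeff d φ := by
  classical
  induction φ using MvPolynomial.induction_on' with
  | monomial e r =>
    rw [aeval_neg_X_monomial, coeff_monomial, coeff_monomial]
    split_ifs with h
    · rw [h]
    · rw [mul_zero]
  | add p q hp hq => rw [map_add, coeff_add, coeff_add, hp, hq, mul_add]

theorem homogeneousComponent_one_eq_zero_of_aeval_neg_X_eq_self [NoZeroDivisors R]
    [CharZero R] {φ : MvPolynomial σ R} (h : aeval (fun i => -X i) φ = φ) :
    homogeneousComponent 1 φ = 0 := by
  ext d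
  rw [coeff_homogeneousComponent, coeff_zero]
  split_ifs with hd
  · have hcoeff := coeff_aeval_neg_X φ d
    rw [h, hd, pow_one, neg_one_mul] at hcoeff
    exact self_eq_neg.mp hcoeff
  · rfl

end CommRing

end MvPolynomial

theorem exists_card_le_weightedHomogeneousComponent_iterate_subset {K : Type*} [Field K]
    (D : Derivation K (MvPolynomial ℕ K) (MvPolynomial ℕ K)) (hD : ∀ n, D (X n) = X (n + 1))
    (S : Finset (MvPolynomial ℕ K)) :
    ∃ N, ∀ M, ∃ T : Finset (MvPolynomial ℕ K), T.card ≤ N ∧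
      (weightedHomogeneousComponent id M ∘ homogeneousComponent 2) ''
        {y | ∃ x ∈ S, ∃ k : ℕ, y = D^[k] x} ⊆ T := by
  classical
  set W := S.sup (weightedTotalDegree id)
  refine ⟨S.card * (W + 1) + 1, fun M => ?_⟩
  set Q := weightedHomogeneousComponent (R := K) id M ∘ homogeneousComponent 2
  set T := insert 0 ((S ×ˢ range (W + 1)).image fun p => Q (D^[M - p.2] p.1))
  have hDX (i : ℕ) : IsWeightedHomogeneous id (D (X i)) (id i + 1) := by
    rw [hD]
    exact isWeightedHomogeneous_X K id (i + 1)
  have hT : ∀ x ∈ S, ∀ k : ℕ, Q (D^[k] x) ∈ T := by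
    intro x hx k
    have hDk : ⇑(D.toLinearMap ^ k) = D^[k] := by
      simp only [Module.End.coe_pow, Derivation.coeFn_coe]
    by_cases h : weightedHomogeneousComponent id M (D^[k] x) = 0
    · simp [Q, T, weightedHomogeneousComponent_homogeneousComponent_comm, h]
    rw [← hDk] at h
    obtain ⟨m, rfl, hm⟩ := exists_weightedHomogeneousComponent_ne_zero_of_map _
      (fun hφ => by simpa [hDk] using hφ.iterate_derivation D hDX k) h
    have hmW : m ≤ W := by
      by_contra! hlt
      exact hm (weightedHomogeneousComponent_eq_zero _ _ ((le_sup hx).trans_lt hlt))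
    refine mem_insert_of_mem (mem_image.mpr ⟨(x, m), ?_, by simp⟩)
    exact mem_product.mpr ⟨hx, mem_range.mpr (by omega)⟩
  refine ⟨T, (card_insert_le _ _).trans (by grw [card_image_le]; simp), ?_⟩
  rintro _ ⟨_, ⟨x, hx, k, rfl⟩, rfl⟩
  exact hT x hx k

/-- Let `A = K[u₀, u₁, …]` over a field `K` of characteristic zero, with derivation `∂`
determined by `∂(uₙ) = u_{n+1}`, and let `σ` be the automorphism with `σ(uₙ) = -uₙ`.
Then the fixed subalgebra `Aᵠ` is not finitely generated as a differential algebra: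
there is no finite subset `S ⊆ Aᵠ` such that `Aᵠ` is generated as a `K`-algebra by all
iterated derivatives `∂ᵏ(x)`, `x ∈ S`. -/
theorem fixed_subalgebra_not_differentially_finitely_generated
    (K : Type*) [Field K] [CharZero K]
    (σ : MvPolynomial ℕ K →ₐ[K] MvPolynomial ℕ K)
    (hσ : σ = aeval fun n : ℕ => -(X n : MvPolynomial ℕ K))
    (D : Derivation K (MvPolynomial ℕ K) (MvPolynomial ℕ K))
    (hD : ∀ n : ℕ, D (X n) = X (n + 1)) :
    ¬ ∃ S : Finset (MvPolynomial ℕ K),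
        (∀ x ∈ S, σ x = x) ∧
        (∀ a : MvPolynomial ℕ K,
          a ∈ Algebra.adjoin K
              {y : MvPolynomial ℕ K | ∃ x ∈ S, ∃ k : ℕ, y = (⇑D)^[k] x}
            ↔ σ a = a) := by
  rintro ⟨S, -, hS⟩
  subst hσ
  set G := {y : MvPolynomial ℕ K | ∃ x ∈ S, ∃ k : ℕ, y = (⇑D)^[k] x}
  have hG : ∀ g ∈ G, homogeneousComponent 1 g = 0 := fun g hg =>
    homogeneousComponent_one_eq_zero_of_aeval_neg_X_eq_self ((hS g).mp (Algebra.subset_adjoin hg))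
  obtain ⟨N, hN⟩ := exists_card_le_weightedHomogeneousComponent_iterate_subset D hD S
  obtain ⟨T, hTcard, hT⟩ := hN (2 * N + 1)
  have hmem (i : Fin (N + 1)) :
      X (i : ℕ) * X (2 * N + 1 - i) ∈ Submodule.span K (T : Set (MvPolynomial ℕ K)) := by
    have hfixed : X (i : ℕ) * X (2 * N + 1 - i) ∈ Algebra.adjoin K G := (hS _).mpr (by simp)
    refine Submodule.span_mono hT ?_
    simpa [show (i : ℕ) + (2 * N + 1 - i) = 2 * N + 1 by omega] using
      X_mul_X_mem_span_weightedHomogeneousComponent_of_mem_adjoin id hG hfixed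
  have hcard := linearIndependent_le_span_aux' _
    (linearIndependent_X_mul_X_sub (R := K) (Nat.lt_succ_self _)) _ (Set.range_subset_iff.mpr hmem)
  simp only [Fintype.card_fin, Finset.coe_sort_coe, Fintype.card_coe] at hcard
  omega
end

section
/- Let A be a weak vertex operator algebra, i.e., a differential graded left-symmetric algebra whose Li filtration satisfies [E_i(A), E_j(A)] ⊆ E_{i+j+1}(A) where [a,b] = ab - ba. Then the associated graded algebra gr A = ⊕_{i≥0} E_i(A)/E_{i+1}(A), with product [a][b] = [ab], is a commutative associative differential graded algebra, with derivation induced by ∂. -/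
/-- Products `∂^{d₁}a₁ ⋯ ∂^{d_h}a_h` (with all parenthesizations) of derivatives of
homogeneous elements, with total derivative degree `d₁ + ⋯ + d_h` recorded. -/
inductive LiProd {K A : Type*} [Field K] [NonAssocRing A] [Module K A]
    (gr : ℕ → Submodule K A) (D : A →ₗ[K] A) : ℕ → A → Prop
  | single (d n : ℕ) (a : A) (ha : a ∈ gr n) : LiProd gr D d ((⇑D)^[d] a)
  | mul {i j : ℕ} {x y : A} :
      LiProd gr D i x → LiProd gr D j y → LiProd gr D (i + j) (x * y)

/-- The Li filtration: `E_n(A)` is the span of all products of derivatives of homogeneous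
elements with total derivative degree `≥ n`. -/
def LiE {K A : Type*} [Field K] [NonAssocRing A] [Module K A]
    (gr : ℕ → Submodule K A) (D : A →ₗ[K] A) (n : ℕ) : Submodule K A :=
  Submodule.span K {x : A | ∃ m : ℕ, n ≤ m ∧ LiProd gr D m x}

/-!
Everything follows from two facts about the Li filtration: it is multiplicative,
`E_i E_j ⊆ E_{i+j}`, and `∂ E_i ⊆ E_{i+1}`. Both are checked on the spanning products (the
second by the Leibniz rule) and extend by linearity. Commutativity of `gr A` is the weak VOA axiom itself.
For associativity, left symmetry rewrites the associator `(xy)z - x(yz)` as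
`[xy, z] + [z, x]y + x[z, y]`, a sum of terms lying one step deeper in the filtration.
-/

theorem associator_eq_of_leftSymm {A : Type*} [NonUnitalNonAssocRing A] {x y z : A}
    (hls : (z * x) * y - z * (x * y) = (x * z) * y - x * (z * y)) :
    (x * y) * z - x * (y * z) = ((x * y) * z - z * (x * y)) + (z * x - x * z) * y
      + x * (z * y - y * z) := by
  rw [sub_mul, mul_sub, sub_eq_iff_eq_add.mp hls]
  abel

section LiFiltration

variable {K A : Type*} [Field K] [NonAssocRing A] [Module K A]
  {gr : ℕ → Submodule K A} {D : A →ₗ[K] A}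

theorem LiE_antitone : Antitone (LiE gr D) := fun _ _ h =>
  Submodule.span_mono fun _ ⟨m, hm, hp⟩ => ⟨m, h.trans hm, hp⟩

theorem LiProd.mem_LiE {m n : ℕ} {x : A} (hx : LiProd gr D m x) (h : n ≤ m) :
    x ∈ LiE gr D n :=
  Submodule.subset_span ⟨m, h, hx⟩

variable [SMulCommClass K A A] [IsScalarTower K A A]

theorem mul_mem_LiE {i j : ℕ} {x y : A} (hx : x ∈ LiE gr D i) (hy : y ∈ LiE gr D j) :
    x * y ∈ LiE gr D (i + j) := by
  have hxy := Submodule.apply_mem_map₂ (LinearMap.mul K A) hx hy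
  rw [LiE, LiE, Submodule.map₂_span_span] at hxy
  refine Submodule.span_le.mpr ?_ hxy
  rintro _ ⟨x, ⟨m, hm, hx⟩, y, ⟨m', hm', hy⟩, rfl⟩
  exact (hx.mul hy).mem_LiE (add_le_add hm hm')

theorem mul_mem_LiE_of_le {i j n : ℕ} {x y : A} (hx : x ∈ LiE gr D i)
    (hy : y ∈ LiE gr D j) (h : n ≤ i + j) : x * y ∈ LiE gr D n :=
  LiE_antitone h (mul_mem_LiE hx hy)

theorem LiProd.map_mem_LiE_succ (hleibniz : ∀ a b : A, D (a * b) = D a * b + a * D b)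
    {m : ℕ} {x : A} (hx : LiProd gr D m x) :
    D x ∈ LiE gr D (m + 1) := by
  induction hx with
  | single d n a ha =>
    rw [← Function.iterate_succ_apply' (⇑D) d a]
    exact (LiProd.single (d + 1) n a ha).mem_LiE le_rfl
  | @mul p q u v hu hv ihu ihv =>
    rw [hleibniz]
    exact add_mem (mul_mem_LiE_of_le ihu (hv.mem_LiE le_rfl) (by omega))
      (mul_mem_LiE_of_le (hu.mem_LiE le_rfl) ihv (by omega))

theorem map_mem_LiE_succ (hleibniz : ∀ a b : A, D (a * b) = D a * b + a * D b)
    {i : ℕ} {x : A} (hx : x ∈ LiE gr D i) :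
    D x ∈ LiE gr D (i + 1) := by
  have hDx := Submodule.mem_map_of_mem (f := D) hx
  rw [LiE, Submodule.map_span] at hDx
  refine Submodule.span_le.mpr ?_ hDx
  rintro _ ⟨x, ⟨m, hm, hx⟩, rfl⟩
  exact LiE_antitone (by omega) (hx.map_mem_LiE_succ hleibniz)

end LiFiltration

theorem weakVOA_gr_comm_assoc_general {K A : Type*} [Field K] [NonAssocRing A]
    [Module K A] [SMulCommClass K A A] [IsScalarTower K A A]
    (gr : ℕ → Submodule K A) (D : A →ₗ[K] A)
    (hleibniz : ∀ a b : A, D (a * b) = D a * b + a * D b)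
    (hls : ∀ a b c : A, (a * b) * c - a * (b * c) = (b * a) * c - b * (a * c))
    (hbr : ∀ i j : ℕ, ∀ x ∈ LiE gr D i, ∀ y ∈ LiE gr D j,
      x * y - y * x ∈ LiE gr D (i + j + 1)) :
    -- the product of `gr A` is graded:
    (∀ i j : ℕ, ∀ x ∈ LiE gr D i, ∀ y ∈ LiE gr D j, x * y ∈ LiE gr D (i + j)) ∧
    -- the product `[x][y] = [xy]` is well defined on `⊕ E_i/E_{i+1}`:
    (∀ i j : ℕ, ∀ x ∈ LiE gr D i, ∀ x' ∈ LiE gr D i, ∀ y ∈ LiE gr D j,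
      x - x' ∈ LiE gr D (i + 1) →
        x * y - x' * y ∈ LiE gr D (i + j + 1) ∧ y * x - y * x' ∈ LiE gr D (i + j + 1)) ∧
    -- it is commutative:
    (∀ i j : ℕ, ∀ x ∈ LiE gr D i, ∀ y ∈ LiE gr D j,
      x * y - y * x ∈ LiE gr D (i + j + 1)) ∧
    -- it is associative:
    (∀ i j k : ℕ, ∀ x ∈ LiE gr D i, ∀ y ∈ LiE gr D j, ∀ z ∈ LiE gr D k,
      (x * y) * z - x * (y * z) ∈ LiE gr D (i + j + k + 1)) ∧
    -- `∂` induces a well-defined degree-one map on the associated graded: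
    (∀ i : ℕ, ∀ x ∈ LiE gr D i, D x ∈ LiE gr D (i + 1)) := by
  refine ⟨fun _ _ _ hx _ hy => mul_mem_LiE hx hy, ?_, hbr, ?_,
    fun _ _ hx => map_mem_LiE_succ hleibniz hx⟩
  · intro i j x _ x' _ y hy hxx'
    rw [← sub_mul, ← mul_sub]
    exact ⟨mul_mem_LiE_of_le hxx' hy (by omega), mul_mem_LiE_of_le hy hxx' (by omega)⟩
  · intro i j k x hx y hy z hz
    rw [associator_eq_of_leftSymm (hls z x y)]
    exact add_mem (add_mem (hbr _ _ _ (mul_mem_LiE hx hy) _ hz)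
      (mul_mem_LiE_of_le (hbr _ _ _ hz _ hx) hy (by omega)))
      (mul_mem_LiE_of_le hx (hbr _ _ _ hz _ hy) (by omega))

/-- For a weak vertex operator algebra `A` (a differential graded left-symmetric algebra
whose Li filtration satisfies `[E_i, E_j] ⊆ E_{i+j+1}`), the associated graded
`gr A = ⊕ E_i/E_{i+1}` with product `[a][b] = [ab]` and derivation induced by `∂` is a
commutative associative differential graded algebra: the product is well defined modulo
the filtration, graded, commutative and associative at the graded level, and `∂` induces
a degree-one derivation. -/
theorem weakVOA_gr_comm_assoc {K A : Type*} [Field K] [NonAssocRing A]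
    [Module K A] [SMulCommClass K A A] [IsScalarTower K A A]
    (gr : ℕ → Submodule K A) (D : A →ₗ[K] A)
    (hone : (1 : A) ∈ gr 0)
    (hgr_mul : ∀ m n : ℕ, ∀ a ∈ gr m, ∀ b ∈ gr n, a * b ∈ gr (m + n))
    (hgr_der : ∀ n : ℕ, ∀ a ∈ gr n, D a ∈ gr (n + 1))
    (hsup : (⨆ n : ℕ, gr n) = ⊤)
    (hleibniz : ∀ a b : A, D (a * b) = D a * b + a * D b)
    (hls : ∀ a b c : A, (a * b) * c - a * (b * c) = (b * a) * c - b * (a * c))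
    (hbr : ∀ i j : ℕ, ∀ x ∈ LiE gr D i, ∀ y ∈ LiE gr D j,
      x * y - y * x ∈ LiE gr D (i + j + 1)) :
    -- the product of `gr A` is graded:
    (∀ i j : ℕ, ∀ x ∈ LiE gr D i, ∀ y ∈ LiE gr D j, x * y ∈ LiE gr D (i + j)) ∧
    -- the product `[x][y] = [xy]` is well defined on `⊕ E_i/E_{i+1}`:
    (∀ i j : ℕ, ∀ x ∈ LiE gr D i, ∀ x' ∈ LiE gr D i, ∀ y ∈ LiE gr D j,
      x - x' ∈ LiE gr D (i + 1) →
        x * y - x' * y ∈ LiE gr D (i + j + 1) ∧ y * x - y * x' ∈ LiE gr D (i + j + 1)) ∧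
    -- it is commutative:
    (∀ i j : ℕ, ∀ x ∈ LiE gr D i, ∀ y ∈ LiE gr D j,
      x * y - y * x ∈ LiE gr D (i + j + 1)) ∧
    -- it is associative:
    (∀ i j k : ℕ, ∀ x ∈ LiE gr D i, ∀ y ∈ LiE gr D j, ∀ z ∈ LiE gr D k,
      (x * y) * z - x * (y * z) ∈ LiE gr D (i + j + k + 1)) ∧
    -- `∂` induces a well-defined degree-one map on the associated graded:
    (∀ i : ℕ, ∀ x ∈ LiE gr D i, D x ∈ LiE gr D (i + 1)) :=
  weakVOA_gr_comm_assoc_general gr D hleibniz hls hbr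
end

section
/- Let V be a vertex algebra and let A, B, C ⊆ V be C[∂]-submodules. Then ⟦A,B⟧ · C ⊆ ⟦A, B·C⟧, where X·Y is the span of all products x_{(n)}y with n ∈ ℤ and ⟦X,Y⟧ is the span of all x_{(n)}y with n ≥ 0. In particular, for any subset X ⊆ V, the subspace ⟦X, V⟧ is a two-sided vertex algebra ideal of V. -/
/-- A vertex algebra over `ℂ`: a vector space with bilinear `n`-th products
`a ⊗ b ↦ a₍ₙ₎b` (`n ∈ ℤ`), vacuum element, and translation operator, satisfying the
field axiom, the vacuum axioms, translation invariance, and the standard consequences of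
locality: quasi-commutativity, the non-commutative Wick formula, and the commutator
formula (all expressed in terms of modes). The normally ordered product is
`ab = a₍₋₁₎b` and the `λ`-bracket is `[a_λ b] = ∑_{n≥0} (λⁿ/n!) a₍ₙ₎b`. -/
structure VertexAlgebra (V : Type*) [AddCommGroup V] [Module ℂ V] where
  /-- the `n`-th products `a₍ₙ₎b` -/
  np : ℤ → V →ₗ[ℂ] V →ₗ[ℂ] V
  /-- the vacuum element `𝟙` -/
  vac : V
  /-- the infinitesimal translation operator `∂` -/
  T : V →ₗ[ℂ] V
  /-- field axiom: `a₍ₙ₎b = 0` for `n` sufficiently large -/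
  field_trunc : ∀ a b : V, ∃ N : ℕ, ∀ n : ℕ, N ≤ n → np (n : ℤ) a b = 0
  /-- vacuum axiom: `a₍₋₁₎𝟙 = a` -/
  vac_create : ∀ a : V, np (-1) a vac = a
  /-- vacuum axiom: `a₍ₙ₎𝟙 = 0` for `n ≥ 0` -/
  vac_ann : ∀ (a : V) (n : ℕ), np (n : ℤ) a vac = 0
  /-- vacuum axiom: `Y(𝟙,z) = id` -/
  vac_id : ∀ (a : V) (n : ℤ), np n vac a = if n = -1 then a else 0
  /-- `(∂a)₍ₙ₎b = -n a₍ₙ₋₁₎b` -/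
  trans_shift : ∀ (n : ℤ) (a b : V), np n (T a) b = (-n : ℂ) • np (n - 1) a b
  /-- translation invariance: `∂` is a derivation of all products -/
  trans_der : ∀ (n : ℤ) (a b : V), T (np n a b) = np n (T a) b + np n a (T b)
  /-- quasi-commutativity `ab - ba = ∫_{-∂}^0 dλ [a_λ b]` in terms of modes -/
  quasicomm : ∀ (a b : V) (N : ℕ), (∀ n : ℕ, N ≤ n → np (n : ℤ) a b = 0) →
    np (-1) a b - np (-1) b a =
      ∑ n ∈ Finset.range N,
        ((-1 : ℂ) ^ n / (Nat.factorial (n + 1) : ℂ)) • (⇑T)^[n + 1] (np (n : ℤ) a b)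
  /-- the non-commutative Wick formula
  `[a_λ bc] = [a_λ b]c + b[a_λ c] + ∫_0^λ dμ [[a_λ b]_μ c]` in terms of modes -/
  wick : ∀ (n : ℕ) (a b c : V),
    np (n : ℤ) a (np (-1) b c) =
      np (-1) (np (n : ℤ) a b) c + np (-1) b (np (n : ℤ) a c) +
      ∑ j ∈ Finset.Icc 1 n,
        (Nat.choose n j : ℂ) • np ((j : ℤ) - 1) (np ((n : ℤ) - (j : ℤ)) a b) c
  /-- the commutator formula -/
  comm_formula : ∀ (m : ℕ) (n : ℤ) (a b c : V),
    np (m : ℤ) a (np n b c) - np n b (np (m : ℤ) a c) =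
      ∑ j ∈ Finset.range (m + 1),
        (Nat.choose m j : ℂ) • np ((m : ℤ) + n - (j : ℤ)) (np (j : ℤ) a b) c

variable {V : Type*} [AddCommGroup V] [Module ℂ V]

/-- `A · B`: the span of all products `a₍ₙ₎b`, `a ∈ A`, `b ∈ B`, `n ∈ ℤ`. -/
def VertexAlgebra.allProd (W : VertexAlgebra V) (A B : Submodule ℂ V) : Submodule ℂ V :=
  Submodule.span ℂ {x : V | ∃ a ∈ A, ∃ b ∈ B, ∃ n : ℤ, x = W.np n a b}

/-- `⟦A, B⟧`: the span of all products `a₍ₙ₎b`, `a ∈ A`, `b ∈ B`, `n ≥ 0`. -/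
def VertexAlgebra.posProd (W : VertexAlgebra V) (A B : Submodule ℂ V) : Submodule ℂ V :=
  Submodule.span ℂ {x : V | ∃ a ∈ A, ∃ b ∈ B, ∃ n : ℕ, x = W.np (n : ℤ) a b}

/-- `⟦X, V⟧` for a subset `X ⊆ V`. -/
def VertexAlgebra.posProdSet (W : VertexAlgebra V) (X : Set V) : Submodule ℂ V :=
  Submodule.span ℂ {x : V | ∃ a ∈ X, ∃ b : V, ∃ n : ℕ, x = W.np (n : ℤ) a b}


/-! The Borcherds identity for `r, p ≥ 0` follows from the commutator formula (its case `r = 0`)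
by induction on `r`. Choosing `r` with `a₍r+j₎b = 0` for all `j ≥ 0` kills its left side and
expresses `b₍k₎(a₍s₎c)` through products `a₍·₎(b₍·₎c)` and products `b₍·₎(a₍s'₎c)` with `s' > s`;
since `a₍s'₎c = 0` for large `s'`, descending induction on `s` puts `b₍k₎(a₍s₎c)` into every
subspace containing all `a₍p₎(b₍q₎c)`, `p ≥ 0`. The case `p = 0` of the identity then does the
same for `(a₍m₎b)₍n₎c`. Both `⟦A, B·C⟧` and `⟦X, V⟧` contain the products `a₍p₎(b₍q₎c)` of their
spanning elements, which gives the inclusion and the ideal property. -/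

open Finset

theorem Finset.sum_range_succ_choose_smul {R M : Type*} [Semiring R] [AddCommMonoid M]
    [Module R M] (g : ℕ → M) (n : ℕ) :
    ∑ i ∈ range (n + 2), ((n + 1).choose i : R) • g i =
      ∑ i ∈ range (n + 1), (n.choose i : R) • g i +
        ∑ i ∈ range (n + 1), (n.choose i : R) • g (i + 1) := by
  simp only [Nat.cast_smul_eq_nsmul]
  exact sum_choose_succ_nsmul (fun i _ => g i) n

namespace VertexAlgebra

section BorcherdsSums

variable {M : Type*} [AddCommGroup M] [Module ℂ M]

/-- With `X P Q = (a₍Q₎b)₍P₎c` this is the left side of the Borcherds identity. -/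
def borcherdsLeft (X : ℤ → ℤ → M) (r p : ℕ) (q : ℤ) : M :=
  ∑ j ∈ range (p + 1), (p.choose j : ℂ) • X (p + q - j) (r + j)

/-- With `K P Q = a₍P₎(b₍Q₎c) - b₍Q₎(a₍P₎c)` this is the right side of the Borcherds identity. -/
def borcherdsRight (K : ℤ → ℤ → M) (r p : ℕ) (q : ℤ) : M :=
  ∑ j ∈ range (r + 1), ((-1 : ℂ) ^ j * r.choose j) • K (p + r - j) (q + j)

theorem borcherdsLeft_succ_left (X : ℤ → ℤ → M) (r p : ℕ) (q : ℤ) :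
    borcherdsLeft X r (p + 1) q = borcherdsLeft X r p (q + 1) + borcherdsLeft X (r + 1) p q := by
  simp only [borcherdsLeft, sum_range_succ_choose_smul]
  congr 1 <;> refine sum_congr rfl fun j _ => ?_ <;> push_cast <;> ring_nf

theorem borcherdsRight_succ (K : ℤ → ℤ → M) (r p : ℕ) (q : ℤ) :
    borcherdsRight K (r + 1) p q = borcherdsRight K r (p + 1) q - borcherdsRight K r p (q + 1) := by
  simp only [borcherdsRight, mul_comm ((-1 : ℂ) ^ _), mul_smul]
  rw [sum_range_succ_choose_smul (fun j => (-1 : ℂ) ^ j • K (p + (r + 1 : ℕ) - j) (q + j)),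
    sub_eq_add_neg, ← sum_neg_distrib]
  congr 1 <;> refine sum_congr rfl fun j _ => ?_
  · push_cast; ring_nf
  · rw [pow_succ, mul_neg_one, neg_smul, smul_neg]; push_cast; ring_nf

end BorcherdsSums

variable (W : VertexAlgebra V)

theorem borcherds_identity (a b c : V) (r p : ℕ) (q : ℤ) :
    borcherdsLeft (fun P Q => W.np P (W.np Q a b) c) r p q =
      borcherdsRight (fun P Q => W.np P a (W.np Q b c) - W.np Q b (W.np P a c)) r p q := by
  induction r generalizing p q with
  | zero =>
    simp [borcherdsLeft, borcherdsRight, W.comm_formula]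
  | succ r ih =>
    rw [borcherdsRight_succ, ← ih, ← ih, borcherdsLeft_succ_left]
    abel

theorem np_np_swap_mem {a b c : V} {M : Submodule ℂ V}
    (h : ∀ (p : ℕ) (q : ℤ), W.np p a (W.np q b c) ∈ M) (s : ℕ) (k : ℤ) :
    W.np k b (W.np s a c) ∈ M := by
  obtain ⟨N, hN⟩ := W.field_trunc a b
  obtain ⟨Nc, hNc⟩ := W.field_trunc a c
  suffices H : ∀ d s, Nc ≤ s + d → ∀ k, W.np k b (W.np s a c) ∈ M from H Nc s (by omega) k
  intro d
  induction d with
  | zero => intro s hs k; simp [hNc s (by omega)]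
  | succ d ih =>
    intro s hs k
    rcases le_or_gt Nc s with hs' | hs'
    · simp [hNc s hs']
    set K : ℤ → ℤ → V := fun P Q => W.np P a (W.np Q b c) - W.np Q b (W.np P a c)
    have hK : ∀ P : ℤ, s < P → ∀ Q, K P Q ∈ M := by
      intro P hP Q
      lift P to ℕ using (by omega)
      exact sub_mem (h P Q) (ih P (by omega) Q)
    have hzero : borcherdsRight K N s (k - N) = 0 := by
      rw [← borcherds_identity]
      refine sum_eq_zero fun j _ => ?_
      have hab : W.np (N + j : ℕ) a b = 0 := hN _ (by omega)
      push_cast at hab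
      simp only [hab, map_zero, LinearMap.zero_apply, smul_zero]
    rw [borcherdsRight, sum_range_succ, add_eq_zero_iff_neg_eq] at hzero
    have hlast : ((-1 : ℂ) ^ N * N.choose N) • K (s + N - N) (k - N + N) ∈ M :=
      hzero ▸ neg_mem (sum_mem fun j hj => Submodule.smul_mem _ _ (hK _ (by simp at hj; omega) _))
    rw [Nat.choose_self, Nat.cast_one, mul_one, add_sub_cancel_right, sub_add_cancel,
      Submodule.smul_mem_iff _ (by simp)] at hlast
    simpa [K] using sub_mem (h s k) hlast

theorem np_np_assoc_mem {a b c : V} {M : Submodule ℂ V}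
    (h : ∀ (p : ℕ) (q : ℤ), W.np p a (W.np q b c) ∈ M) (m : ℕ) (n : ℤ) :
    W.np n (W.np m a b) c ∈ M := by
  have hassoc := W.borcherds_identity a b c m 0 n
  simp only [borcherdsLeft, borcherdsRight, zero_add, sum_range_one, Nat.choose_self,
    Nat.cast_one, one_smul, Nat.cast_zero, sub_zero, add_zero] at hassoc
  rw [hassoc]
  refine sum_mem fun j hj => Submodule.smul_mem _ _ ?_
  rw [show (m : ℤ) - j = (m - j : ℕ) by simp at hj; omega]
  exact sub_mem (h _ _) (W.np_np_swap_mem h _ _)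

theorem allProd_posProd_le (A B C : Submodule ℂ V) :
    W.allProd (W.posProd A B) C ≤ W.posProd A (W.allProd B C) := by
  refine Submodule.span_le.2 ?_
  rintro _ ⟨u, hu, c, hc, n, rfl⟩
  suffices W.posProd A B ≤ (W.posProd A (W.allProd B C)).comap ((W.np n).flip c) from this hu
  refine Submodule.span_le.2 ?_
  rintro _ ⟨a, ha, b, hb, m, rfl⟩
  show W.np n (W.np m a b) c ∈ W.posProd A (W.allProd B C)
  refine W.np_np_assoc_mem (fun p q => ?_) m n
  exact Submodule.subset_span ⟨a, ha, _, Submodule.subset_span ⟨b, hb, c, hc, q, rfl⟩, p, rfl⟩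

section Ideal

variable {X : Set V}

theorem np_mem_posProdSet {x : V} (hx : x ∈ X) (m : ℕ) (w : V) :
    W.np m x w ∈ W.posProdSet X :=
  Submodule.subset_span ⟨x, hx, w, m, rfl⟩

theorem posProdSet_le_comap {M : Submodule ℂ V} (f : V →ₗ[ℂ] V)
    (h : ∀ x ∈ X, ∀ (m : ℕ) (w : V), f (W.np m x w) ∈ M) : W.posProdSet X ≤ M.comap f :=
  Submodule.span_le.2 <| by
    rintro _ ⟨x, hx, w, m, rfl⟩
    exact h x hx m w

theorem T_mem_posProdSet {u : V} (hu : u ∈ W.posProdSet X) : W.T u ∈ W.posProdSet X := by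
  refine W.posProdSet_le_comap (M := W.posProdSet X) W.T (fun x hx m w => ?_) hu
  rw [W.trans_der, W.trans_shift]
  refine add_mem ?_ (W.np_mem_posProdSet hx m (W.T w))
  cases m with
  | zero => simp
  | succ m => simpa using Submodule.smul_mem _ _ (W.np_mem_posProdSet hx m w)

theorem np_mem_posProdSet_of_left_mem {u : V} (hu : u ∈ W.posProdSet X) (n : ℤ) (v : V) :
    W.np n u v ∈ W.posProdSet X :=
  W.posProdSet_le_comap ((W.np n).flip v)
    (fun _ hx m _ => W.np_np_assoc_mem (fun p _ => W.np_mem_posProdSet hx p _) m n) hu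

theorem np_mem_posProdSet_of_right_mem {u : V} (hu : u ∈ W.posProdSet X) (n : ℤ) (v : V) :
    W.np n v u ∈ W.posProdSet X :=
  W.posProdSet_le_comap (W.np n v)
    (fun _ hx m _ => W.np_np_swap_mem (fun p _ => W.np_mem_posProdSet hx p _) m n) hu

end Ideal

end VertexAlgebra

/-- For `ℂ[∂]`-submodules `A, B, C` of a vertex algebra `V` one has
`⟦A,B⟧ · C ⊆ ⟦A, B·C⟧`.  In particular, for any subset `X ⊆ V`, the subspace `⟦X, V⟧`
is a two-sided vertex algebra ideal of `V`. -/
theorem posProd_allProd_le_and_ideal (W : VertexAlgebra V) :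
    (∀ A B C : Submodule ℂ V,
      (∀ a ∈ A, W.T a ∈ A) → (∀ b ∈ B, W.T b ∈ B) → (∀ c ∈ C, W.T c ∈ C) →
        W.allProd (W.posProd A B) C ≤ W.posProd A (W.allProd B C)) ∧
    (∀ X : Set V, ∀ a ∈ W.posProdSet X,
      W.T a ∈ W.posProdSet X ∧
      ∀ (v : V) (n : ℤ),
        W.np n a v ∈ W.posProdSet X ∧ W.np n v a ∈ W.posProdSet X) :=
  ⟨fun A B C _ _ _ => W.allProd_posProd_le A B C, fun _ _ ha => ⟨W.T_mem_posProdSet ha,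
    fun v n => ⟨W.np_mem_posProdSet_of_left_mem ha n v, W.np_mem_posProdSet_of_right_mem ha n v⟩⟩⟩
end

section
/- Let V be a vertex algebra and a, b ∈ V with λ-bracket [a_λ b] = Σ_{j=0}^n λ^j c_j. Then for each i with 0 ≤ i ≤ n, ∂^{n-i}[∂^i a, b] = Σ_{j=0}^n ((-1)^j/(i+j+1)) ∂^{n+j+1} c_j, where [x,y] = xy - yx is the commutator of the normally ordered product. Since the (n+1)×(n+1) matrix with entries 1/(i+j+1) (a Hilbert matrix, up to signs in columns) is invertible, the elements ∂^{n+j+1}c_j are uniquely determined by the commutators [∂^i a, b], 0 ≤ i ≤ n. -/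
/-!
Translation acts on λ-brackets by `[∂ⁱa_λ b] = (-λ)ⁱ [a_λ b]`, so quasi-commutativity
`[x, y] = ∫_{-∂}^0 dλ [x_λ y]` turns the monomial `(-1)ⁱ λ^{i+j} cⱼ` of `[∂ⁱa_λ b]` into
`(-1)ʲ ∂^{i+j+1} cⱼ / (i+j+1)`. The matrix `1/(i+j+1)` is the Cauchy matrix `1/(xᵢ - vⱼ)` with
`xᵢ = i`, `vⱼ = -(j+1)`, which is injective by Lagrange interpolation; on vector-valued
unknowns one tests against linear functionals.
-/

open Finset Polynomial Lagrange in
theorem eq_zero_of_forall_sum_div_sub_eq_zero {K ι : Type*} [Field K] {s : Finset ι}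
    {x v : ι → K} (hx : Set.InjOn x s) (hv : Set.InjOn v s) (hxv : ∀ i ∈ s, ∀ j ∈ s, x i ≠ v j)
    {w : ι → K} (h : ∀ i ∈ s, ∑ j ∈ s, w j / (x i - v j) = 0) : ∀ j ∈ s, w j = 0 := by
  classical
  -- barycentric form: the interpolant with values `w j / nodalWeight` at the nodes `v j`
  -- is `nodal s v` times the Cauchy sum, so it vanishes at the `#s` points `x i`
  set P := interpolate s v (fun j => w j / nodalWeight s v j)
  have hP : P = 0 := by
    refine eq_zero_of_degree_lt_of_eval_index_eq_zero s hx (degree_interpolate_lt _ hv) ?_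
    intro i hi
    have hsum : ∑ j ∈ s, nodalWeight s v j * (x i - v j)⁻¹ * (w j / nodalWeight s v j) =
        ∑ j ∈ s, w j / (x i - v j) := by
      refine sum_congr rfl fun j hj => ?_
      field_simp [nodalWeight_ne_zero hv hj]
    rw [eval_interpolate_not_at_node _ (hxv i hi), hsum, h i hi, mul_zero]
  intro j hj
  have hPj : eval (v j) P = _ := eval_interpolate_at_node _ hv hj
  rw [hP, eval_zero, eq_comm, div_eq_zero_iff] at hPj
  exact hPj.resolve_right (nodalWeight_ne_zero hv hj)

theorem eq_zero_of_forall_sum_inv_sub_smul_eq_zero {K V ι : Type*} [Field K] [AddCommGroup V]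
    [Module K V] {s : Finset ι} {x v : ι → K} (hx : Set.InjOn x s) (hv : Set.InjOn v s)
    (hxv : ∀ i ∈ s, ∀ j ∈ s, x i ≠ v j) {u : ι → V}
    (h : ∀ i ∈ s, ∑ j ∈ s, (x i - v j)⁻¹ • u j = 0) : ∀ j ∈ s, u j = 0 := by
  intro j hj
  rw [← Module.forall_dual_apply_eq_zero_iff K]
  intro φ
  refine eq_zero_of_forall_sum_div_sub_eq_zero hx hv hxv (w := fun j => φ (u j))
    (fun i hi => ?_) j hj
  simpa [div_eq_inv_mul] using congrArg φ (h i hi)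

theorem eq_zero_of_forall_sum_neg_one_pow_div_smul_eq_zero {K V : Type*} [Field K] [CharZero K]
    [AddCommGroup V] [Module K V] {n : ℕ} {u : ℕ → V}
    (h : ∀ i : ℕ, i ≤ n →
      ∑ j ∈ Finset.range (n + 1), ((-1 : K) ^ j / ((i : K) + (j : K) + 1)) • u j = 0) :
    ∀ j : ℕ, j ≤ n → u j = 0 := by
  have hcauchy := eq_zero_of_forall_sum_inv_sub_smul_eq_zero (s := Finset.range (n + 1))
    (x := fun i : ℕ => (i : K)) (v := fun j : ℕ => -((j : K) + 1))
    (u := fun j => (-1 : K) ^ j • u j)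
    Nat.cast_injective.injOn (fun j _ k _ hjk => by simpa using hjk)
    (fun i _ j _ hij => by
      have : ((i + j + 1 : ℕ) : K) = 0 := by push_cast; linear_combination hij
      exact Nat.succ_ne_zero _ (Nat.cast_eq_zero.mp this))
    (fun i hi => by
      rw [← h i (Nat.lt_succ_iff.mp (Finset.mem_range.mp hi))]
      refine Finset.sum_congr rfl fun j _ => ?_
      rw [smul_smul]
      congr 1
      ring)
  intro j hj
  simpa using hcauchy j (Finset.mem_range.mpr (Nat.lt_succ_of_le hj))

namespace VertexAlgebra

variable {V : Type*} [AddCommGroup V] [Module ℂ V] (W : VertexAlgebra V)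

/-- `[a_λ b] = ∑_{j=0}^n λʲ cⱼ`. -/
def HasLambdaBracket (a b : V) (n : ℕ) (c : ℕ → V) : Prop :=
  (∀ j : ℕ, j ≤ n → W.np (j : ℤ) a b = (Nat.factorial j : ℂ) • c j) ∧
    ∀ j : ℕ, n < j → W.np (j : ℤ) a b = 0

theorem iterate_T_smul (k : ℕ) (s : ℂ) (x : V) : (⇑W.T)^[k] (s • x) = s • (⇑W.T)^[k] x := by
  rw [← Module.End.coe_pow, map_smul]

theorem np_iterate_T_left (a b : V) (i m : ℕ) :
    W.np (m : ℤ) ((⇑W.T)^[i] a) b =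
      ((-1 : ℂ) ^ i * (m.descFactorial i : ℂ)) • W.np ((m - i : ℕ) : ℤ) a b := by
  induction i generalizing m with
  | zero => simp
  | succ i ih =>
    rw [Function.iterate_succ_apply', W.trans_shift]
    cases m with
    | zero => simp
    | succ k =>
      rw [show ((k + 1 : ℕ) : ℤ) - 1 = k by push_cast; ring, ih, smul_smul,
        Nat.succ_descFactorial_succ, Nat.add_sub_add_right]
      congr 1
      push_cast
      ring

variable {W}

/-- `[∂ⁱa_λ b] = (-λ)ⁱ [a_λ b]`. -/
theorem HasLambdaBracket.iterate_T_left {a b : V} {n : ℕ} {c : ℕ → V}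
    (h : W.HasLambdaBracket a b n c) (i : ℕ) :
    W.HasLambdaBracket ((⇑W.T)^[i] a) b (n + i)
      (fun m => if i ≤ m then (-1 : ℂ) ^ i • c (m - i) else 0) := by
  refine ⟨fun m hm => ?_, fun m hm => ?_⟩
  · rw [np_iterate_T_left]
    dsimp only
    split_ifs with him
    · rw [h.1 _ (by omega), smul_smul, smul_smul, ← Nat.factorial_mul_descFactorial him]
      congr 1
      push_cast
      ring
    · rw [Nat.descFactorial_eq_zero_iff_lt.mpr (by omega)]
      simp
  · rw [np_iterate_T_left, h.2 _ (by omega), smul_zero]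

/-- Quasi-commutativity `[a, b] = ∫_{-∂}^0 dλ [a_λ b]`. -/
theorem HasLambdaBracket.commutator_eq {a b : V} {n : ℕ} {c : ℕ → V}
    (h : W.HasLambdaBracket a b n c) :
    W.np (-1) a b - W.np (-1) b a =
      ∑ j ∈ Finset.range (n + 1), ((-1 : ℂ) ^ j / ((j : ℂ) + 1)) • (⇑W.T)^[j + 1] (c j) := by
  rw [W.quasicomm a b (n + 1) h.2]
  refine Finset.sum_congr rfl fun j hj => ?_
  rw [h.1 j (Nat.lt_succ_iff.mp (Finset.mem_range.mp hj)), iterate_T_smul, smul_smul,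
    Nat.factorial_succ]
  congr 1
  have : (Nat.factorial j : ℂ) ≠ 0 := Nat.cast_ne_zero.mpr (Nat.factorial_ne_zero j)
  push_cast
  field_simp

theorem HasLambdaBracket.commutator_iterate_T_left {a b : V} {n : ℕ} {c : ℕ → V}
    (h : W.HasLambdaBracket a b n c) (i : ℕ) :
    W.np (-1) ((⇑W.T)^[i] a) b - W.np (-1) b ((⇑W.T)^[i] a) =
      ∑ j ∈ Finset.range (n + 1),
        ((-1 : ℂ) ^ j / ((i : ℂ) + (j : ℂ) + 1)) • (⇑W.T)^[i + j + 1] (c j) := by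
  rw [(h.iterate_T_left i).commutator_eq, show n + i + 1 = i + (n + 1) by ring,
    Finset.sum_range_add, Finset.sum_eq_zero, zero_add]
  · refine Finset.sum_congr rfl fun j _ => ?_
    rw [if_pos (Nat.le_add_right i j), Nat.add_sub_cancel_left, iterate_T_smul, smul_smul]
    congr 1
    have hsq : (-1 : ℂ) ^ i * (-1) ^ i = 1 := by rw [← pow_add, Even.neg_one_pow ⟨i, rfl⟩]
    push_cast
    linear_combination (-1 : ℂ) ^ j / ((i : ℂ) + j + 1) * hsq
  · intro m hm
    rw [if_neg (by simpa using hm), ← Module.End.coe_pow, map_zero, smul_zero]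

end VertexAlgebra

/-- Let `V` be a vertex algebra and `a, b ∈ V` with `[a_λ b] = ∑_{j=0}^n λʲ cⱼ`
(i.e. `a₍ⱼ₎b = j! cⱼ` for `j ≤ n` and `a₍ⱼ₎b = 0` for `j > n`).  Then for `0 ≤ i ≤ n`,
`∂^{n-i}[∂ⁱa, b] = ∑_{j=0}^n ((-1)ʲ/(i+j+1)) ∂^{n+j+1} cⱼ`, where `[x,y] = xy - yx` is
the commutator of the normally ordered product.  Since the matrix `((-1)ʲ/(i+j+1))` is
invertible, the elements `∂^{n+j+1}cⱼ` are uniquely determined by the commutators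
`[∂ⁱa, b]`, `0 ≤ i ≤ n`. -/
theorem vertexAlgebra_commutators_determine_lambda_bracket
    {V : Type*} [AddCommGroup V] [Module ℂ V] (W : VertexAlgebra V)
    (a b : V) (n : ℕ) (c : ℕ → V)
    (hc : ∀ j : ℕ, j ≤ n → W.np (j : ℤ) a b = (Nat.factorial j : ℂ) • c j)
    (hvan : ∀ j : ℕ, n < j → W.np (j : ℤ) a b = 0) :
    (∀ i : ℕ, i ≤ n →
      (⇑W.T)^[n - i]
          (W.np (-1) ((⇑W.T)^[i] a) b - W.np (-1) b ((⇑W.T)^[i] a)) =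
        ∑ j ∈ Finset.range (n + 1),
          ((-1 : ℂ) ^ j / ((i : ℂ) + (j : ℂ) + 1)) • (⇑W.T)^[n + j + 1] (c j)) ∧
    (∀ d e : ℕ → V,
      (∀ i : ℕ, i ≤ n →
        ∑ j ∈ Finset.range (n + 1), ((-1 : ℂ) ^ j / ((i : ℂ) + (j : ℂ) + 1)) • d j =
        ∑ j ∈ Finset.range (n + 1), ((-1 : ℂ) ^ j / ((i : ℂ) + (j : ℂ) + 1)) • e j) →
      ∀ j : ℕ, j ≤ n → d j = e j) := by
  have hab : W.HasLambdaBracket a b n c := ⟨hc, hvan⟩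
  refine ⟨fun i hi => ?_, fun d e hde j hj => ?_⟩
  · rw [hab.commutator_iterate_T_left, ← Module.End.coe_pow, map_sum]
    refine Finset.sum_congr rfl fun j _ => ?_
    rw [map_smul, Module.End.coe_pow, ← Function.iterate_add_apply,
      show n - i + (i + j + 1) = n + j + 1 by omega]
  · refine sub_eq_zero.mp (eq_zero_of_forall_sum_neg_one_pow_div_smul_eq_zero
      (K := ℂ) (u := fun j => d j - e j) (fun i hi => ?_) j hj)
    simp only [smul_sub, Finset.sum_sub_distrib, hde i hi, sub_self]
end
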